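/- arXiv:1504.06213 — 5 statements merged into one kernel-verified Lean document; each statement's English description precedes it below -/
import Mathlib

section
/- Let F be a field of characteristic zero and let P ∈ F[X_1,…,X_N] be homogeneous of degree n with P = ∑_{i=1}^{T} α_i ∏_{j=1}^{d} Q_{ij}, where each α_i ∈ F and the constant term of each Q_{ij} is either 0 or 1. For each i let S_i = { j ∈ {1,…,d} : the constant term of Q_{ij} equals 1 }. Then P = ∑_{i=1}^{T} α_i · Hom^n[ ∏_{j ∉ S_i} Q_{ij} · ∑_{l=0}^{n} ( ∑_{U ⊆ S_i, |U| = l} ∏_{j ∈ U} Hom^{≥1}[Q_{ij}] ) ]. -/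
/-!
Since `P` is homogeneous of degree `n`, it equals its own degree-`n` component, which we take
termwise. Split `∏ j, Q i j` into the factors outside `S i` and those in `S i`; writing each of the
latter as `1 + Hom^{≥1}[Q i j]` and expanding gives the sum over all `U ⊆ S i` of
`∏ j ∈ U, Hom^{≥1}[Q i j]`. A product of `|U|` polynomials without constant term has no monomials
of degree `< |U|`, so the terms with `|U| > n` do not contribute to the degree-`n` component and
the sum over `l` may be cut at `n`.
-/

open MvPolynomial

section

variable {σ R ι : Type*}

theorem MvPolynomial.coeff_mul_prod_eq_zero_of_degree_lt [CommSemiring R]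
    (A : MvPolynomial σ R) {s : Finset ι} {p : ι → MvPolynomial σ R}
    (hp : ∀ j ∈ s, coeff 0 (p j) = 0) {m : σ →₀ ℕ} (hm : m.degree < s.card) :
    coeff m (A * ∏ j ∈ s, p j) = 0 := by
  let toSeries := coeToMvPowerSeries.ringHom (σ := σ) (R := R)
  rw [← coeff_coe]
  apply MvPowerSeries.coeff_of_lt_order
  have one_le_order : ∀ j ∈ s, 1 ≤ (toSeries (p j)).order := fun j hj =>
    MvPowerSeries.one_le_order_iff_constCoeff_eq_zero.2 <| by
      rw [← MvPowerSeries.coeff_zero_eq_constantCoeff_apply]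
      exact (coeff_coe _ _).trans (hp j hj)
  calc (m.degree : ℕ∞) < ∑ j ∈ s, 1 := by simpa using hm
    _ ≤ ∑ j ∈ s, (toSeries (p j)).order := Finset.sum_le_sum one_le_order
    _ ≤ (toSeries A).order + (∏ j ∈ s, toSeries (p j)).order :=
      (MvPowerSeries.le_order_prod _ _).trans le_add_self
    _ ≤ (toSeries (A * ∏ j ∈ s, p j)).order := by
      rw [map_mul, map_prod]
      exact MvPowerSeries.le_order_mul

theorem MvPolynomial.homogeneousComponent_mul_prod_eq_zero_of_lt_card [CommSemiring R]
    (A : MvPolynomial σ R) {s : Finset ι} {p : ι → MvPolynomial σ R}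
    (hp : ∀ j ∈ s, coeff 0 (p j) = 0) {n : ℕ} (hn : n < s.card) :
    homogeneousComponent n (A * ∏ j ∈ s, p j) = 0 :=
  homogeneousComponent_eq_zero' _ _ fun _ hd hdeg =>
    mem_support_iff.1 hd (coeff_mul_prod_eq_zero_of_degree_lt A hp (hdeg ▸ hn))

theorem MvPolynomial.homogeneousComponent_mul_sum_powersetCard_range [CommSemiring R]
    (A : MvPolynomial σ R) {s : Finset ι} {p : ι → MvPolynomial σ R}
    (hp : ∀ j ∈ s, coeff 0 (p j) = 0) {n m : ℕ} (hm : s.card ≤ m) :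
    homogeneousComponent n
        (A * ∑ l ∈ Finset.range (m + 1), ∑ U ∈ Finset.powersetCard l s, ∏ j ∈ U, p j) =
      homogeneousComponent n
        (A * ∑ l ∈ Finset.range (n + 1), ∑ U ∈ Finset.powersetCard l s, ∏ j ∈ U, p j) := by
  simp only [Finset.mul_sum, map_sum]
  have vanish : ∀ l ≥ min n s.card + 1,
      ∑ U ∈ Finset.powersetCard l s, homogeneousComponent n (A * ∏ j ∈ U, p j) = 0 := by
    intro l hl
    rcases min_choice n s.card with hmin | hmin
    · refine Finset.sum_eq_zero fun U hU => ?_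
      obtain ⟨hUs, rfl⟩ := Finset.mem_powersetCard.1 hU
      exact homogeneousComponent_mul_prod_eq_zero_of_lt_card A (fun j hj => hp j (hUs hj))
        (by omega)
    · rw [Finset.powersetCard_eq_empty.2 (by omega), Finset.sum_empty]
  rw [Finset.eventually_constant_sum vanish (n := m + 1) (by omega),
    Finset.eventually_constant_sum vanish (n := n + 1) (by omega)]

theorem MvPolynomial.prod_eq_sum_powersetCard_prod_sub_C [CommRing R] (s : Finset ι)
    {p : ι → MvPolynomial σ R} (hp : ∀ j ∈ s, coeff 0 (p j) = 1) :
    ∏ j ∈ s, p j = ∑ l ∈ Finset.range (s.card + 1), ∑ U ∈ Finset.powersetCard l s,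
      ∏ j ∈ U, (p j - C (coeff 0 (p j))) := by
  rw [← Finset.sum_powerset, ← Finset.prod_add_one]
  exact Finset.prod_congr rfl fun j hj => by rw [hp j hj, map_one, sub_add_cancel]

end

theorem stmt3_general (F : Type*) [Field F] (N n T d : ℕ)
    (P : MvPolynomial (Fin N) F) (hP : P.IsHomogeneous n)
    (α : Fin T → F) (Q : Fin T → Fin d → MvPolynomial (Fin N) F)
    (hrep : P = ∑ i, C (α i) * ∏ j, Q i j)
    (S : Fin T → Finset (Fin d))
    (hS : ∀ i j, j ∈ S i ↔ coeff 0 (Q i j) = 1) :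
    P = ∑ i, C (α i) *
      homogeneousComponent n
        ((∏ j ∈ (S i)ᶜ, Q i j) *
          ∑ l ∈ Finset.range (n + 1), ∑ U ∈ Finset.powersetCard l (S i),
            ∏ j ∈ U, (Q i j - C (coeff 0 (Q i j)))) := by
  rw [← homogeneousComponent_eq_self hP, hrep, map_sum]
  refine Finset.sum_congr rfl fun i _ => ?_
  rw [homogeneousComponent_C_mul, ← Finset.prod_compl_mul_prod (S i),
    prod_eq_sum_powersetCard_prod_sub_C _ fun j hj => (hS i j).1 hj]
  exact congrArg _ <| homogeneousComponent_mul_sum_powersetCard_range _ (fun j _ => by simp) le_rfl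

/-- Let `P ∈ F[X_1,…,X_N]` be homogeneous of degree `n` with
`P = ∑_{i=1}^T α_i ∏_{j=1}^d Q_{ij}` where the constant term of each `Q_{ij}` is `0` or `1`.
With `S_i = {j : coeff 0 (Q_{ij}) = 1}`, we have
`P = ∑_i α_i · Hom^n[ (∏_{j ∉ S_i} Q_{ij}) · ∑_{l=0}^n ∑_{U ⊆ S_i, |U|=l} ∏_{j ∈ U} Hom^{≥1}[Q_{ij}] ]`,
where `Hom^{≥1}[Q] = Q - C (coeff 0 Q)`. -/
theorem stmt3 (F : Type*) [Field F] [CharZero F] (N n T d : ℕ)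
    (P : MvPolynomial (Fin N) F) (hP : P.IsHomogeneous n)
    (α : Fin T → F) (Q : Fin T → Fin d → MvPolynomial (Fin N) F)
    (hconst : ∀ i j, coeff 0 (Q i j) = 0 ∨ coeff 0 (Q i j) = 1)
    (hrep : P = ∑ i, C (α i) * ∏ j, Q i j)
    (S : Fin T → Finset (Fin d))
    (hS : ∀ i j, j ∈ S i ↔ coeff 0 (Q i j) = 1) :
    P = ∑ i, C (α i) *
      homogeneousComponent n
        ((∏ j ∈ (S i)ᶜ, Q i j) *
          ∑ l ∈ Finset.range (n + 1), ∑ U ∈ Finset.powersetCard l (S i),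
            ∏ j ∈ U, (Q i j - C (coeff 0 (Q i j)))) :=
  stmt3_general F N n T d P hP α Q hrep S hS
end

section
/- Let 0 ≤ μ < 1, δ = (1−μ)/2, s ≥ 1 an integer, and let Q_{ij} ∈ F[X_1,…,X_N] for i ∈ {1,…,T}, j ∈ {1,…,d} be polynomials each depending on at most N^μ variables, with T·d ≤ N^{δs/4}. Let B be the set of all multilinear monomials of support exactly s all of whose variables occur in a single Q_{ij}. Let V be a random subset of the variables {X_1,…,X_N} in which each variable is included independently with probability p = N^{−μ−δ}. Then the probability that at least one monomial of B has all its variables in V is at most N^{−(3/4)·δ·s}. -/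
/-!
Union bound over the pairs `(Q i j, S)` with `S` an `s`-subset of the variables of `Q i j`.
Each `S` survives with probability `p ^ s`, and each `Q i j` has at most `(N ^ μ) ^ s` such
subsets, so the probability is at most `T d (N ^ μ p) ^ s = T d N ^ (-δ s) ≤ N ^ (δ s / 4 - δ s)`.
-/

open MvPolynomial

/-- Probability, under the product distribution where each variable is kept alive
independently with probability `p`, of the event `E` of subsets of the variables. -/
noncomputable def restrictProb (σ : Type*) [Fintype σ] (p : ℝ) (E : Finset σ → Prop) : ℝ := by
  classical
  exact ∑ V : Finset σ, if E V then p ^ V.card * (1 - p) ^ (Fintype.card σ - V.card) else 0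

open Finset

section RandomRestriction

variable {σ : Type*} [Fintype σ]

/- Expand `∏ x, (p + [x ∉ S] (1 - p)) = p ^ #S` over subsets `t` of alive variables:
the term of `t` vanishes unless `S ⊆ t`, and is then the weight of `t`. -/
theorem restrictProb_superset (p : ℝ) (S : Finset σ) :
    restrictProb σ p (S ⊆ ·) = p ^ #S := by
  classical
  have hcompl : ∀ t : Finset σ, ∏ x ∈ tᶜ, (if x ∈ S then 0 else 1 - p) =
      if S ⊆ t then (1 - p) ^ (Fintype.card σ - #t) else 0 := by
    intro t
    split_ifs with hSt
    · rw [prod_congr rfl fun x hx => if_neg fun hxS => mem_compl.1 hx (hSt hxS), prod_const,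
        card_compl]
    · obtain ⟨x, hxS, hxt⟩ := not_subset.1 hSt
      exact prod_eq_zero (mem_compl.2 hxt) (if_pos hxS)
  calc restrictProb σ p (S ⊆ ·)
      = ∑ t : Finset σ, p ^ #t * ∏ x ∈ tᶜ, (if x ∈ S then 0 else 1 - p) := by
        unfold restrictProb
        refine sum_congr rfl fun t _ => ?_
        rw [hcompl]
        split_ifs <;> simp
    _ = ∏ x, (p + if x ∈ S then 0 else 1 - p) := by
        simp [prod_add, compl_eq_univ_sdiff]
    _ = p ^ #S := by
        simp_rw [apply_ite (p + ·), add_zero, add_sub_cancel, prod_ite_mem, univ_inter,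
          prod_const]

theorem restrictProb_exists_le_sum {p : ℝ} (hp0 : 0 ≤ p) (hp1 : p ≤ 1) {ι : Type*}
    (A : Finset ι) (E : ι → Finset σ → Prop) :
    restrictProb σ p (fun V => ∃ i ∈ A, E i V) ≤ ∑ i ∈ A, restrictProb σ p (E i) := by
  classical
  unfold restrictProb
  rw [sum_comm]
  refine sum_le_sum fun V _ => ?_
  set w := p ^ #V * (1 - p) ^ (Fintype.card σ - #V)
  have hw : 0 ≤ w := mul_nonneg (pow_nonneg hp0 _) (pow_nonneg (sub_nonneg.2 hp1) _)
  split_ifs with hV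
  · obtain ⟨i, hi, hEi⟩ := hV
    calc w = if E i V then w else 0 := (if_pos hEi).symm
      _ ≤ ∑ j ∈ A, if E j V then w else 0 :=
        single_le_sum (f := fun j => if E j V then w else 0)
          (fun j _ => by split_ifs <;> simp [hw]) hi
  · exact sum_nonneg fun j _ => by split_ifs <;> simp [hw]

theorem restrictProb_exists_superset_le {p : ℝ} (hp0 : 0 ≤ p) (hp1 : p ≤ 1) {ι : Type*}
    (A : Finset ι) (S : ι → Finset σ) :
    restrictProb σ p (fun V => ∃ i ∈ A, S i ⊆ V) ≤ ∑ i ∈ A, p ^ #(S i) := by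
  simpa only [restrictProb_superset] using restrictProb_exists_le_sum hp0 hp1 A (S · ⊆ ·)

end RandomRestriction

theorem sum_powersetCard_pow_le {α : Type*} (W : Finset α) (s : ℕ) {p M : ℝ} (hp : 0 ≤ p)
    (hW : (#W : ℝ) ≤ M) :
    ∑ S ∈ W.powersetCard s, p ^ #S ≤ (M * p) ^ s := by
  rw [sum_congr rfl fun S hS => by rw [(mem_powersetCard.1 hS).2], sum_const,
    card_powersetCard, nsmul_eq_mul, mul_pow]
  gcongr
  calc ((#W).choose s : ℝ) ≤ ((#W ^ s : ℕ) : ℝ) := by exact_mod_cast (#W).choose_le_pow s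
    _ ≤ M ^ s := by push_cast; gcongr

theorem stmt8_general (F : Type*) [Field F] (N T d s : ℕ) (μ : ℝ)
    (hμ0 : 0 ≤ μ) (hs : 1 ≤ s)
    (Q : Fin T → Fin d → MvPolynomial (Fin N) F)
    (hvars : ∀ i j, ((Q i j).vars.card : ℝ) ≤ (N : ℝ) ^ μ)
    (hTd : ((T * d : ℕ) : ℝ) ≤ (N : ℝ) ^ ((1 - μ) / 2 * s / 4)) :
    restrictProb (Fin N) ((N : ℝ) ^ (-μ - (1 - μ) / 2))
        (fun V => ∃ (i : Fin T) (j : Fin d) (S : Finset (Fin N)),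
          S.card = s ∧ S ⊆ (Q i j).vars ∧ S ⊆ V) ≤
      (N : ℝ) ^ (-(3 / 4 : ℝ) * ((1 - μ) / 2) * s) := by
  classical
  set δ : ℝ := (1 - μ) / 2 with hδ
  set p : ℝ := (N : ℝ) ^ (-μ - δ)
  rcases N.eq_zero_or_pos with rfl | hN
  · have hnone : ∀ S : Finset (Fin 0), S.card ≠ s := fun S => by
      rw [S.eq_empty_of_isEmpty, card_empty]; omega
    simp only [restrictProb, hnone, false_and, exists_false, if_false, sum_const_zero]
    positivity
  have hN0 : (0 : ℝ) < N := by exact_mod_cast hN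
  have hp0 : 0 ≤ p := by positivity
  have hp1 : p ≤ 1 := Real.rpow_le_one_of_one_le_of_nonpos (by exact_mod_cast hN) (by linarith)
  let A := (univ : Finset (Fin T × Fin d)).sigma fun ij => (Q ij.1 ij.2).vars.powersetCard s
  have hevent : (fun V => ∃ (i : Fin T) (j : Fin d) (S : Finset (Fin N)),
      S.card = s ∧ S ⊆ (Q i j).vars ∧ S ⊆ V) = fun V => ∃ x ∈ A, x.2 ⊆ V := by
    ext V
    simp only [A, Sigma.exists, Prod.exists, mem_sigma, mem_univ, true_and, mem_powersetCard,
      and_assoc]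
    exact exists_congr fun i => exists_congr fun j => exists_congr fun S => and_left_comm
  calc restrictProb (Fin N) p _ = restrictProb (Fin N) p (fun V => ∃ x ∈ A, x.2 ⊆ V) := by
        rw [hevent]
    _ ≤ ∑ x ∈ A, p ^ #x.2 := restrictProb_exists_superset_le hp0 hp1 A Sigma.snd
    _ = ∑ ij : Fin T × Fin d, ∑ S ∈ (Q ij.1 ij.2).vars.powersetCard s, p ^ #S := sum_sigma _ _ _
    _ ≤ ∑ _ij : Fin T × Fin d, ((N : ℝ) ^ μ * p) ^ s :=
        sum_le_sum fun ij _ => sum_powersetCard_pow_le _ s hp0 (hvars ij.1 ij.2)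
    _ = ((T * d : ℕ) : ℝ) * (N : ℝ) ^ (-δ * s) := by
        rw [← Real.rpow_add hN0, ← Real.rpow_natCast, ← Real.rpow_mul hN0.le]
        simp only [sum_const, card_univ, Fintype.card_prod, Fintype.card_fin, nsmul_eq_mul]
        ring_nf
    _ ≤ (N : ℝ) ^ (δ * s / 4) * (N : ℝ) ^ (-δ * s) := by gcongr
    _ = (N : ℝ) ^ (-(3 / 4 : ℝ) * δ * s) := by
        rw [← Real.rpow_add hN0]
        ring_nf

/-- Let `0 ≤ μ < 1`, `δ = (1-μ)/2`, `s ≥ 1`, and let `Q_{ij}` be polynomials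
each depending on at most `N^μ` variables with `T·d ≤ N^{δs/4}`. Let `B` be the set of
multilinear monomials of support exactly `s` whose variables all occur in a single `Q_{ij}`
(equivalently, the `s`-element subsets of the variables of a single `Q_{ij}`). Under the
random restriction keeping each variable alive independently with probability
`p = N^{-μ-δ}`, the probability that some monomial of `B` survives (has all its variables
alive) is at most `N^{-(3/4)·δ·s}`. -/
theorem stmt8 (F : Type*) [Field F] (N T d s : ℕ) (μ : ℝ)
    (hμ0 : 0 ≤ μ) (hμ1 : μ < 1) (hs : 1 ≤ s)
    (Q : Fin T → Fin d → MvPolynomial (Fin N) F)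
    (hvars : ∀ i j, ((Q i j).vars.card : ℝ) ≤ (N : ℝ) ^ μ)
    (hTd : ((T * d : ℕ) : ℝ) ≤ (N : ℝ) ^ ((1 - μ) / 2 * s / 4)) :
    restrictProb (Fin N) ((N : ℝ) ^ (-μ - (1 - μ) / 2))
        (fun V => ∃ (i : Fin T) (j : Fin d) (S : Finset (Fin N)),
          S.card = s ∧ S ⊆ (Q i j).vars ∧ S ⊆ V) ≤
      (N : ℝ) ^ (-(3 / 4 : ℝ) * ((1 - μ) / 2) * s) :=
  stmt8_general F N T d s μ hμ0 hs Q hvars hTd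
end

section
/- Let F be a field of characteristic zero and let P ∈ F[X_1,…,X_N] be a nonzero polynomial of individual degree at most k in every variable, with P = ∑_{i=1}^{T} ∏_{j=1}^{d} Q_{ij} where each Q_{ij} depends on at most s variables. Then: (1) for every variable y ∈ {X_1,…,X_N} and every integer 1 ≤ r ≤ k, the partial derivative ∂^r P/∂y^r can be written as ∑_{i=1}^{T'} ∏_{j=1}^{d} Q'_{ij} with T' ≤ T·(k+1)² and each Q'_{ij} depending on at most s variables; and (2) for every a ∈ F^N, the translate P(X̄ + ā) can be written as ∑_{i=1}^{T} ∏_{j=1}^{d} Q''_{ij} with each Q''_{ij} depending on at most s variables. -/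
/-!
Lagrange interpolation in the variable `y` at the `k + 1` distinct nodes `0, …, k` writes
`P = ∑ₜ ℓₜ(X_y) · P(y := t)` with univariate Lagrange basis polynomials `ℓₜ`. Each `P(y := t)` is
free of `y`, so `∂ʳP/∂yʳ = ∑ₜ ℓₜ⁽ʳ⁾(X_y) · P(y := t)`. Substituting `P = ∑ᵢ ∏ⱼ Qᵢⱼ` and absorbing
`ℓₜ⁽ʳ⁾(X_y)` into a factor `Qᵢⱼ` that already contains `y` keeps every factor on at most `s`
variables; a summand `i` with no such factor contributes `∂ʳ(∏ⱼ Qᵢⱼ)/∂yʳ = 0`. This leaves at most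
`T·(k+1)` summands. The translate is the image under an algebra map sending each variable to a
polynomial in that variable alone.
-/

open MvPolynomial

namespace MvPolynomial

open Finset

section Substitution

variable {R σ τ : Type*} [CommSemiring R]

theorem vars_X_subset [DecidableEq σ] (v : σ) : (X v : MvPolynomial σ R).vars ⊆ {v} := by
  rw [vars_def, ← Multiset.toFinset_singleton]
  exact Multiset.toFinset_subset.2 (Multiset.subset_of_le (degrees_X' v))

theorem vars_aeval_subset [DecidableEq τ] {A : Finset τ} (f : σ → MvPolynomial τ R)
    (Q : MvPolynomial σ R) (hf : ∀ v ∈ Q.vars, (f v).vars ⊆ A) : (aeval f Q).vars ⊆ A := by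
  rw [aeval_eq_bind₁]
  exact (vars_bind₁ f Q).trans (biUnion_subset.2 hf)

theorem vars_toMvPolynomial_subset (y : σ) (p : Polynomial R) :
    (p.toMvPolynomial y).vars ⊆ {y} := by
  classical
  rw [Polynomial.toMvPolynomial_eq_rename_comp]
  refine (vars_rename _ _).trans fun x hx => ?_
  obtain ⟨_, _, rfl⟩ := mem_image.1 hx
  exact mem_singleton_self y

theorem monomial_eq_monomial_erase_mul_X_pow (y : σ) (u : σ →₀ ℕ) (c : R) :
    monomial u c = monomial (u.erase y) c * X y ^ u y := by
  rw [← monomial_add_single, Finsupp.erase_add_single]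

variable [DecidableEq σ]

noncomputable def substConst (y : σ) (t : R) : MvPolynomial σ R →ₐ[R] MvPolynomial σ R :=
  aeval (Function.update X y (C t))

theorem vars_substConst_subset (y : σ) (t : R) (Q : MvPolynomial σ R) :
    (substConst y t Q).vars ⊆ Q.vars.erase y :=
  vars_aeval_subset _ Q fun v hv => by
    by_cases h : v = y
    · subst h; simp
    · rw [Function.update_of_ne h]
      exact (vars_X_subset v).trans (singleton_subset_iff.2 (mem_erase.2 ⟨h, hv⟩))

theorem substConst_of_notMem_vars {y : σ} (t : R) {Q : MvPolynomial σ R} (h : y ∉ Q.vars) :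
    substConst y t Q = Q := by
  conv_rhs => rw [← aeval_X_left_apply Q]
  refine hom_congr_vars (by ext; simp [substConst]) (fun v hv _ => ?_) rfl
  simp [substConst, Function.update_of_ne (ne_of_mem_of_not_mem hv h)]

theorem substConst_monomial (y : σ) (t : R) (u : σ →₀ ℕ) (c : R) :
    substConst y t (monomial u c) = monomial (u.erase y) c * C (t ^ u y) := by
  have hy : y ∉ (monomial (u.erase y) c).vars := fun h => by
    obtain ⟨w, hw, hyw⟩ := (mem_vars_iff_mem_support y).1 h
    rw [mem_singleton.1 (support_monomial_subset hw), Finsupp.support_erase] at hyw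
    exact notMem_erase y _ hyw
  rw [monomial_eq_monomial_erase_mul_X_pow y, map_mul, map_pow, substConst_of_notMem_vars t hy,
    substConst, aeval_X, Function.update_self, map_pow]

theorem vars_toMvPolynomial_mul_substConst_subset (p : Polynomial R) (t : R) {y : σ}
    {Q : MvPolynomial σ R} (hy : y ∈ Q.vars) :
    (p.toMvPolynomial y * substConst y t Q).vars ⊆ Q.vars :=
  (vars_mul _ _).trans (union_subset
    ((vars_toMvPolynomial_subset y p).trans (singleton_subset_iff.2 hy))
    ((vars_substConst_subset y t Q).trans (erase_subset y _)))

end Substitution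

section Derivative

variable {R σ ι : Type*} [CommSemiring R]

theorem pderiv_toMvPolynomial_mul (y : σ) (p : Polynomial R) {B : MvPolynomial σ R}
    (hB : y ∉ B.vars) :
    pderiv y (p.toMvPolynomial y * B) = (Polynomial.derivative p).toMvPolynomial y * B := by
  rw [Derivation.leibniz, pderiv_eq_zero_of_notMem_vars hB, Polynomial.toMvPolynomial,
    Derivation.map_aeval, pderiv_X_self]
  simp [mul_comm]

theorem iterate_pderiv_sum_toMvPolynomial_mul (y : σ) (s : Finset ι) (p : ι → Polynomial R)
    {B : ι → MvPolynomial σ R} (hB : ∀ i ∈ s, y ∉ (B i).vars) (r : ℕ) :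
    (pderiv y)^[r] (∑ i ∈ s, (p i).toMvPolynomial y * B i)
      = ∑ i ∈ s, (Polynomial.derivative^[r] (p i)).toMvPolynomial y * B i := by
  induction r with
  | zero => rfl
  | succ r ih =>
    simp only [Function.iterate_succ_apply', ih, map_sum]
    exact sum_congr rfl fun i hi => pderiv_toMvPolynomial_mul y _ (hB i hi)

theorem iterate_pderiv_eq_zero_of_notMem_vars {y : σ} {B : MvPolynomial σ R} (h : y ∉ B.vars)
    {r : ℕ} (hr : r ≠ 0) : (pderiv y)^[r] B = 0 := by
  obtain ⟨r, rfl⟩ := Nat.exists_eq_succ_of_ne_zero hr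
  rw [Function.iterate_succ_apply, pderiv_eq_zero_of_notMem_vars h,
    Function.iterate_fixed (map_zero _)]

end Derivative

section Interpolation

variable {F σ ι : Type*} [Field F] [DecidableEq σ] [DecidableEq ι]

theorem sum_lagrangeBasis_mul_substConst {s : Finset ι} {v : ι → F} (hvs : Set.InjOn v s)
    (y : σ) {P : MvPolynomial σ F} (hP : P.degreeOf y < #s) :
    ∑ i ∈ s, (Lagrange.basis s v i).toMvPolynomial y * substConst y (v i) P = P := by
  have hpow : ∀ n < #s, ∑ i ∈ s, (Lagrange.basis s v i).toMvPolynomial y * C (v i ^ n)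
      = X y ^ n := by
    intro n hn
    have h := Lagrange.eq_interpolate hvs (f := Polynomial.X ^ n)
      (by rw [Polynomial.degree_X_pow]; exact_mod_cast hn)
    apply_fun Polynomial.toMvPolynomial y at h
    simp only [map_pow, Polynomial.toMvPolynomial_X, Polynomial.eval_pow, Polynomial.eval_X,
      Lagrange.interpolate_apply, map_sum, map_mul, Polynomial.toMvPolynomial_C] at h
    rw [h]
    exact sum_congr rfl fun i _ => by rw [map_pow, mul_comm]
  conv_lhs => rw [P.as_sum]
  conv_rhs => rw [P.as_sum]
  simp_rw [map_sum, mul_sum]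
  rw [sum_comm]
  refine sum_congr rfl fun u hu => ?_
  simp_rw [substConst_monomial]
  rw [sum_congr rfl fun i _ => mul_left_comm _ _ _, ← mul_sum,
    hpow _ ((monomial_le_degreeOf y hu).trans_lt hP), ← monomial_eq_monomial_erase_mul_X_pow]

theorem iterate_pderiv_eq_sum_lagrangeBasis {s : Finset ι} {v : ι → F} (hvs : Set.InjOn v s)
    (y : σ) {P : MvPolynomial σ F} (hP : P.degreeOf y < #s) (r : ℕ) :
    (pderiv y)^[r] P =
      ∑ i ∈ s, (Polynomial.derivative^[r] (Lagrange.basis s v i)).toMvPolynomial y *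
        substConst y (v i) P := by
  conv_lhs => rw [← sum_lagrangeBasis_mul_substConst hvs y hP]
  exact iterate_pderiv_sum_toMvPolynomial_mul y s _
    (fun i _ h => notMem_erase y _ (vars_substConst_subset y _ P h)) r

theorem iterate_pderiv_sum_prod_eq {α β : Type*} [Fintype α] [Fintype β] {s : Finset ι}
    {v : ι → F} (hvs : Set.InjOn v s) (y : σ) {Q : α → β → MvPolynomial σ F}
    (hP : (∑ i, ∏ j, Q i j).degreeOf y < #s) {r : ℕ} (hr : r ≠ 0) :
    (pderiv y)^[r] (∑ i, ∏ j, Q i j) =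
      ∑ i ∈ univ.filter fun i => ∃ j, y ∈ (Q i j).vars, ∑ t ∈ s,
        (Polynomial.derivative^[r] (Lagrange.basis s v t)).toMvPolynomial y *
          ∏ j, substConst y (v t) (Q i j) := by
  have hfree : ∀ i, (¬∃ j, y ∈ (Q i j).vars) → ∑ t ∈ s,
      (Polynomial.derivative^[r] (Lagrange.basis s v t)).toMvPolynomial y *
        ∏ j, substConst y (v t) (Q i j) = 0 := by
    intro i hi
    have hy : y ∉ (∏ j, Q i j).vars := fun h => hi (by simpa using vars_prod _ h)
    have h0 : (∏ j, Q i j).degreeOf y = 0 := by simpa [mem_vars_iff_degreeOf_ne_zero] using hy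
    -- read the interpolation formula backwards for the `y`-free product
    simp_rw [← map_prod]
    rw [← iterate_pderiv_eq_sum_lagrangeBasis hvs y (h0.trans_lt ((Nat.zero_le _).trans_lt hP)),
      iterate_pderiv_eq_zero_of_notMem_vars hy hr]
  rw [iterate_pderiv_eq_sum_lagrangeBasis hvs y hP,
    sum_filter_of_ne fun i _ => not_imp_comm.1 (hfree i)]
  simp_rw [map_sum, map_prod, mul_sum]
  exact sum_comm

end Interpolation

theorem vars_aeval_X_add_C_subset {R σ : Type*} [CommSemiring R] [DecidableEq σ] (a : σ → R)
    (Q : MvPolynomial σ R) : (aeval (fun v => X v + C (a v)) Q).vars ⊆ Q.vars :=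
  vars_aeval_subset _ Q fun v hv =>
    (vars_add_subset _ _).trans (union_subset ((vars_X_subset v).trans (singleton_subset_iff.2 hv))
      (by simp))

theorem exists_fin_sum_prod_eq {R σ ι κ : Type*} [CommSemiring R] [Fintype ι] [Fintype κ]
    {s : ℕ} (Q : ι → κ → MvPolynomial σ R) (hQ : ∀ i j, (Q i j).vars.card ≤ s) :
    ∃ Q' : Fin (Fintype.card ι) → κ → MvPolynomial σ R,
      (∀ i j, (Q' i j).vars.card ≤ s) ∧ ∑ i, ∏ j, Q i j = ∑ i, ∏ j, Q' i j :=
  ⟨fun i => Q ((Fintype.equivFin ι).symm i), fun _ => hQ _,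
    ((Fintype.equivFin ι).symm.sum_comp _).symm⟩

theorem exists_sum_prod_eq_iterate_pderiv {F σ ι κ : Type*} [Field F] [CharZero F] [Fintype ι]
    [Fintype κ] (y : σ) {k r s : ℕ} (hr : 0 < r) (Q : ι → κ → MvPolynomial σ F)
    (hQ : ∀ i j, (Q i j).vars.card ≤ s) (hdeg : (∑ i, ∏ j, Q i j).degreeOf y ≤ k) :
    ∃ T' ≤ Fintype.card ι * (k + 1), ∃ Q' : Fin T' → κ → MvPolynomial σ F,
      (∀ i j, (Q' i j).vars.card ≤ s) ∧
        (pderiv y)^[r] (∑ i, ∏ j, Q i j) = ∑ i, ∏ j, Q' i j := by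
  classical
  let v : Fin (k + 1) → F := fun t => (t : ℕ)
  have hv : Set.InjOn v (univ : Finset (Fin (k + 1))) := fun a _ b _ h =>
    Fin.ext (Nat.cast_injective h)
  rw [iterate_pderiv_sum_prod_eq hv y (by simpa [Nat.lt_succ_iff] using hdeg) hr.ne']
  let S := univ.filter fun i => ∃ j, y ∈ (Q i j).vars
  choose j₀ hj₀ using fun i : S => (mem_filter.1 i.2).2
  let Q' : S × Fin (k + 1) → κ → MvPolynomial σ F := fun p j =>
    (if j = j₀ p.1 then (Polynomial.derivative^[r] (Lagrange.basis univ v p.2)).toMvPolynomial y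
      else 1) * substConst y (v p.2) (Q p.1 j)
  have hQ' : ∀ p j, (Q' p j).vars.card ≤ s := by
    rintro ⟨i, t⟩ j
    refine (card_le_card ?_).trans (hQ i j)
    by_cases hj : j = j₀ i
    · simpa only [Q', hj, ite_true] using vars_toMvPolynomial_mul_substConst_subset _ _ (hj₀ i)
    · simpa only [Q', if_neg hj, one_mul] using
        (vars_substConst_subset y _ _).trans (erase_subset y _)
  obtain ⟨Q'', hQ'', hsum⟩ := exists_fin_sum_prod_eq Q' hQ'
  refine ⟨_, ?_, Q'', hQ'', ?_⟩
  · rw [Fintype.card_prod, Fintype.card_coe, Fintype.card_fin]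
    exact Nat.mul_le_mul_right _ (card_filter_le _ _)
  · rw [← hsum, Fintype.sum_prod_type, ← sum_coe_sort S]
    refine sum_congr rfl fun i _ => sum_congr rfl fun t _ => ?_
    simp only [Q', prod_mul_distrib, prod_ite_eq', mem_univ, if_true]

end MvPolynomial

theorem stmt14_general (F : Type*) [Field F] [CharZero F] (N k T d s : ℕ)
    (P : MvPolynomial (Fin N) F)
    (hdeg : ∀ v : Fin N, P.degreeOf v ≤ k)
    (Q : Fin T → Fin d → MvPolynomial (Fin N) F)
    (hrep : P = ∑ i, ∏ j, Q i j)
    (hvars : ∀ i j, (Q i j).vars.card ≤ s) :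
    (∀ y : Fin N, ∀ r : ℕ, 1 ≤ r → r ≤ k →
      ∃ T' : ℕ, T' ≤ T * (k + 1) ^ 2 ∧
      ∃ Q' : Fin T' → Fin d → MvPolynomial (Fin N) F,
        (∀ i j, (Q' i j).vars.card ≤ s) ∧
        (fun R => pderiv y R)^[r] P = ∑ i, ∏ j, Q' i j) ∧
    (∀ a : Fin N → F,
      ∃ Q'' : Fin T → Fin d → MvPolynomial (Fin N) F,
        (∀ i j, (Q'' i j).vars.card ≤ s) ∧
        aeval (fun v => X v + C (a v)) P = ∑ i, ∏ j, Q'' i j) := by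
  subst hrep
  refine ⟨fun y r hr _ => ?_, fun a => ?_⟩
  · obtain ⟨T', hT', Q', hQ', h⟩ := exists_sum_prod_eq_iterate_pderiv y hr Q hvars (hdeg y)
    rw [Fintype.card_fin] at hT'
    exact ⟨T', hT'.trans (Nat.mul_le_mul_left T (Nat.le_self_pow two_ne_zero _)), Q', hQ', h⟩
  · refine ⟨fun i j => aeval (fun v => X v + C (a v)) (Q i j),
      fun i j => (Finset.card_le_card (vars_aeval_X_add_C_subset a _)).trans (hvars i j), ?_⟩
    simp_rw [map_sum, map_prod]

/-- Let `P ∈ F[X_1,…,X_N]` be nonzero of individual degree at most `k`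
with `P = ∑_{i=1}^T ∏_{j=1}^d Q_{ij}`, each `Q_{ij}` depending on at most `s` variables.
Then: (1) for every variable `y` and every `1 ≤ r ≤ k`, `∂^r P/∂y^r` has a representation
`∑_{i=1}^{T'} ∏_{j=1}^d Q'_{ij}` with `T' ≤ T·(k+1)²` and each `Q'_{ij}` depending on at
most `s` variables; and (2) for every `a ∈ F^N`, `P(X̄ + ā)` has a representation
`∑_{i=1}^{T} ∏_{j=1}^d Q''_{ij}` with each `Q''_{ij}` depending on at most `s` variables. -/
theorem stmt14 (F : Type*) [Field F] [CharZero F] (N k T d s : ℕ)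
    (P : MvPolynomial (Fin N) F) (hP0 : P ≠ 0)
    (hdeg : ∀ v : Fin N, P.degreeOf v ≤ k)
    (Q : Fin T → Fin d → MvPolynomial (Fin N) F)
    (hrep : P = ∑ i, ∏ j, Q i j)
    (hvars : ∀ i j, (Q i j).vars.card ≤ s) :
    (∀ y : Fin N, ∀ r : ℕ, 1 ≤ r → r ≤ k →
      ∃ T' : ℕ, T' ≤ T * (k + 1) ^ 2 ∧
      ∃ Q' : Fin T' → Fin d → MvPolynomial (Fin N) F,
        (∀ i j, (Q' i j).vars.card ≤ s) ∧
        (fun R => pderiv y R)^[r] P = ∑ i, ∏ j, Q' i j) ∧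
    (∀ a : Fin N → F,
      ∃ Q'' : Fin T → Fin d → MvPolynomial (Fin N) F,
        (∀ i j, (Q'' i j).vars.card ≤ s) ∧
        aeval (fun v => X v + C (a v)) P = ∑ i, ∏ j, Q'' i j) :=
  stmt14_general F N k T d s P hdeg Q hrep hvars
end

section
/- Let F be a field of characteristic zero, let P ∈ F[X_1,…,X_N, Y] be a nonzero polynomial of degree at most k in Y, and let f ∈ F[X_1,…,X_N] be such that P(X_1,…,X_N, f) = 0 and (∂P/∂Y)(0,…,0, f(0,…,0)) ≠ 0. Write P = ∑_{i=0}^{k} C_i(X_1,…,X_N)·Y^i. Then for every integer t ≥ 0 there exists a polynomial R_t ∈ F[Z_0, Z_1, …, Z_k] of degree at most t such that Hom^{≤t}[f] = Hom^{≤t}[R_t(C_0, C_1, …, C_k)]. -/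
/-!
Let `I` be the ideal generated by the variables, so that `Hom^{≤t}[f] = Hom^{≤t}[g]` means
`f - g ∈ I^(t+1)`. With `c = P'(f)(0)⁻¹`, the Newton step `g ↦ g - c·P(g)` improves an
approximation `f - g ∈ I^(n+1)` to one modulo `I^(n+2)`, by Taylor expansion of `P` at `g`, and
it keeps `g` a polynomial in `C_0, …, C_k`. Starting from the constant `f(0)` this gives, for
each `t`, some `R` with `f - R(C_0, …, C_k) ∈ I^(t+1)`. To bound `deg R`, write
`C_i = C_i(0) + D_i` with `D_i ∈ I`: re-expanding `R` around the point `(C_i(0))_i` and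
dropping the terms of degree `> t` changes `R(C_0, …, C_k)` only by a
polynomial in the `D_i` lying in `I^(t+1)`.
-/

open MvPolynomial

/-- The sum of the homogeneous components of `P` of degree at most `t`. -/
noncomputable def homLE {F : Type*} [CommSemiring F] {σ : Type*} (t : ℕ)
    (P : MvPolynomial σ F) : MvPolynomial σ F :=
  ∑ i ∈ Finset.range (t + 1), homogeneousComponent i P

theorem Polynomial.sub_newton_mem_pow {A : Type*} [CommRing A] {I : Ideal A} (P : Polynomial A)
    {f g c : A} {n : ℕ} (hf : P.eval f = 0) (hfg : f - g ∈ I ^ (n + 1))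
    (hc : c * P.derivative.eval g - 1 ∈ I) :
    f - (g - c * P.eval g) ∈ I ^ (n + 2) := by
  obtain ⟨S, hS⟩ := P.binomExpansion g (f - g)
  rw [add_sub_cancel, hf] at hS
  have hlin : (c * P.derivative.eval g - 1) * (f - g) ∈ I ^ (n + 2) := by
    rw [pow_succ' I (n + 1)]
    exact Ideal.mul_mem_mul hc hfg
  have hquad : (f - g) ^ 2 ∈ I ^ (n + 2) := by
    refine Ideal.pow_le_pow_right (show n + 2 ≤ (n + 1) * 2 by omega) ?_
    rw [pow_mul]
    exact Ideal.pow_mem_pow hfg 2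
  have key : f - (g - c * P.eval g)
      = -((c * P.derivative.eval g - 1) * (f - g)) - c * S * (f - g) ^ 2 := by
    linear_combination -c * hS
  rw [key]
  exact sub_mem (neg_mem hlin) (Ideal.mul_mem_left _ _ hquad)

theorem aeval_coeff_sum_X_mul_pow {R A : Type*} [CommSemiring R] [CommSemiring A]
    [Algebra R A] {P : Polynomial A} {k : ℕ} (hdeg : P.natDegree ≤ k)
    (q : MvPolynomial (Fin (k + 1)) R) :
    aeval (fun i : Fin (k + 1) => P.coeff i) (∑ i : Fin (k + 1), X i * q ^ (i : ℕ))
      = P.eval (aeval (fun i : Fin (k + 1) => P.coeff i) q) := by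
  rw [Polynomial.eval_eq_sum_range' (Nat.lt_succ_of_le hdeg), ← Fin.sum_univ_eq_sum_range]
  simp

theorem exists_aeval_coeff_sub_mem_pow {R A : Type*} [CommRing R] [CommRing A] [Algebra R A]
    {I : Ideal A} {P : Polynomial A} {k : ℕ} (hdeg : P.natDegree ≤ k) {f : A}
    (hf : P.eval f = 0) {c : R} (hc : algebraMap R A c * P.derivative.eval f - 1 ∈ I)
    {a : R} (ha : f - algebraMap R A a ∈ I) (n : ℕ) :
    ∃ q : MvPolynomial (Fin (k + 1)) R,
      f - aeval (fun i : Fin (k + 1) => P.coeff i) q ∈ I ^ (n + 1) := by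
  induction n with
  | zero => exact ⟨C a, by simpa using ha⟩
  | succ n ih =>
    obtain ⟨q, hq⟩ := ih
    set g := aeval (fun i : Fin (k + 1) => P.coeff i) q
    have hgf : g - f ∈ I := by
      rw [← neg_sub]
      exact neg_mem (Ideal.pow_le_self n.succ_ne_zero hq)
    have hcg : algebraMap R A c * P.derivative.eval g - 1 ∈ I := by
      have hdiff := Ideal.mem_of_dvd _ (Polynomial.sub_dvd_eval_sub g f P.derivative) hgf
      convert add_mem hc (Ideal.mul_mem_left _ (algebraMap R A c) hdiff) using 1
      ring
    refine ⟨q - C c * ∑ i : Fin (k + 1), X i * q ^ (i : ℕ), ?_⟩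
    rw [map_sub, map_mul, aeval_C, aeval_coeff_sum_X_mul_pow hdeg]
    exact P.sub_newton_mem_pow hf hq hcg

namespace MvPolynomial

variable {R σ : Type*} [CommRing R]

theorem mem_idealOfVars_iff {p : MvPolynomial σ R} :
    p ∈ idealOfVars σ R ↔ constantCoeff p = 0 := by
  rw [← pow_one (idealOfVars σ R), mem_pow_idealOfVars_iff']
  simp [Finsupp.degree_eq_zero_iff, constantCoeff_eq]

theorem aeval_mem_pow_of_forall_mem {ι A : Type*} [CommRing A] [Algebra R A] {I : Ideal A}
    {D : ι → A} (hD : ∀ i, D i ∈ I) {n : ℕ} {q : MvPolynomial ι R}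
    (hq : q ∈ idealOfVars ι R ^ n) : aeval D q ∈ I ^ n := by
  have hmap : (idealOfVars ι R).map (aeval D) ≤ I := by
    rw [Ideal.map_span, Ideal.span_le]
    rintro _ ⟨_, ⟨i, rfl⟩, rfl⟩
    simpa using hD i
  apply Ideal.pow_right_mono hmap n
  rw [← Ideal.map_pow]
  exact Ideal.mem_map_of_mem _ hq

theorem totalDegree_aeval_le {ι : Type*} {u : ι → MvPolynomial σ R}
    (hu : ∀ i, (u i).totalDegree ≤ 1) (p : MvPolynomial ι R) :
    (aeval u p).totalDegree ≤ p.totalDegree := by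
  conv_lhs => rw [p.as_sum, map_sum]
  refine (totalDegree_finsetSum _ _).trans (Finset.sup_le fun m hm => ?_)
  rw [aeval_monomial, ← Algebra.smul_def]
  calc (coeff m p • m.prod fun i e => u i ^ e).totalDegree
      ≤ ∑ i ∈ m.support, (u i ^ m i).totalDegree :=
        (totalDegree_smul_le _ _).trans (totalDegree_finsetProd _ _)
    _ ≤ ∑ i ∈ m.support, m i := Finset.sum_le_sum fun i _ =>
        (totalDegree_pow _ _).trans (by simpa using Nat.mul_le_mul_left (m i) (hu i))
    _ ≤ p.totalDegree := le_totalDegree hm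

theorem coeff_homLE (t : ℕ) (p : MvPolynomial σ R) (m : σ →₀ ℕ) :
    coeff m (homLE t p) = if m.degree ≤ t then coeff m p else 0 := by
  simp [homLE, coeff_sum, coeff_homogeneousComponent]

theorem homLE_eq_homLE_iff {t : ℕ} {p q : MvPolynomial σ R} :
    homLE t p = homLE t q ↔ p - q ∈ idealOfVars σ R ^ (t + 1) := by
  simp only [mem_pow_idealOfVars_iff', MvPolynomial.ext_iff, coeff_homLE, coeff_sub, sub_eq_zero,
    Nat.lt_succ_iff]
  refine forall_congr' fun m => ?_
  by_cases hm : m.degree ≤ t <;> simp [hm]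

theorem sub_homLE_mem_pow (t : ℕ) (p : MvPolynomial σ R) :
    p - homLE t p ∈ idealOfVars σ R ^ (t + 1) := by
  rw [mem_pow_idealOfVars_iff']
  intro m hm
  rw [coeff_sub, coeff_homLE, if_pos (Nat.lt_succ_iff.mp hm), sub_self]

theorem totalDegree_homLE_le (t : ℕ) (p : MvPolynomial σ R) : (homLE t p).totalDegree ≤ t :=
  (totalDegree_finsetSum _ _).trans <| Finset.sup_le fun i hi =>
    (homogeneousComponent_isHomogeneous i p).totalDegree_le.trans (Finset.mem_range_succ_iff.mp hi)

theorem exists_totalDegree_le_aeval_sub_mem_pow {ι : Type*} (u : ι → MvPolynomial σ R)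
    (s : ℕ) (p : MvPolynomial ι R) :
    ∃ p' : MvPolynomial ι R, p'.totalDegree ≤ s ∧
      aeval u p - aeval u p' ∈ idealOfVars σ R ^ (s + 1) := by
  set c : ι → R := fun i => constantCoeff (u i)
  set D : ι → MvPolynomial σ R := fun i => u i - C (c i)
  set Q : MvPolynomial ι R := aeval (fun i => X i + C (c i)) p
  refine ⟨aeval (fun i => X i - C (c i)) (homLE s Q), ?_, ?_⟩
  · refine (totalDegree_aeval_le (fun i => ?_) _).trans (totalDegree_homLE_le s Q)
    exact (totalDegree_sub_C_le _ _).trans ((totalDegree_monomial_le _ _).trans (by simp))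
  · have hp : aeval u p = aeval D Q := by
      rw [comp_aeval_apply]; congr; funext i; simp [D]
    have hp' : aeval u (aeval (fun i => X i - C (c i)) (homLE s Q)) = aeval D (homLE s Q) := by
      rw [comp_aeval_apply]; congr; funext i; simp [D]
    rw [hp, hp', ← map_sub]
    refine aeval_mem_pow_of_forall_mem (fun i => ?_) (sub_homLE_mem_pow s Q)
    simp [mem_idealOfVars_iff, D, c]

end MvPolynomial

theorem stmt15_general (F : Type*) [Field F] (N k : ℕ)
    (P : Polynomial (MvPolynomial (Fin N) F))
    (hdeg : P.natDegree ≤ k)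
    (f : MvPolynomial (Fin N) F)
    (hroot : P.eval f = 0)
    (hderiv : (Polynomial.map (MvPolynomial.eval (fun _ : Fin N => (0 : F)))
        P.derivative).eval (MvPolynomial.eval (fun _ : Fin N => (0 : F)) f) ≠ 0) :
    ∀ t : ℕ, ∃ R : MvPolynomial (Fin (k + 1)) F, R.totalDegree ≤ t ∧
      homLE t f = homLE t (aeval (fun i : Fin (k + 1) => P.coeff (i : ℕ)) R) := by
  intro t
  set u : Fin (k + 1) → MvPolynomial (Fin N) F := fun i => P.coeff i
  have hunit : constantCoeff (P.derivative.eval f) ≠ 0 := by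
    rwa [eval_zero', Polynomial.eval_map, Polynomial.eval₂_hom] at hderiv
  obtain ⟨q, hq⟩ := exists_aeval_coeff_sub_mem_pow (I := idealOfVars (Fin N) F) hdeg hroot
    (c := (constantCoeff (P.derivative.eval f))⁻¹) (a := constantCoeff f)
    (by simp [mem_idealOfVars_iff, hunit]) (by simp [mem_idealOfVars_iff]) t
  obtain ⟨R, hRdeg, hR⟩ := exists_totalDegree_le_aeval_sub_mem_pow u t q
  refine ⟨R, hRdeg, homLE_eq_homLE_iff.mpr ?_⟩
  rw [← sub_add_sub_cancel f (aeval u q)]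
  exact add_mem hq hR

/-- Dvir–Shpilka–Yehudayoff. Let `P ∈ F[X_1,…,X_N, Y]` be a nonzero
polynomial of degree at most `k` in `Y` (viewed as `Polynomial (MvPolynomial (Fin N) F)`
with coefficients `C_i = P.coeff i`), and let `f ∈ F[X_1,…,X_N]` be such that
`P(X_1,…,X_N, f) = 0` and `(∂P/∂Y)(0,…,0, f(0,…,0)) ≠ 0`. Then for every `t ≥ 0` there is a
polynomial `R_t ∈ F[Z_0,…,Z_k]` of degree at most `t` with
`Hom^{≤t}[f] = Hom^{≤t}[R_t(C_0, C_1, …, C_k)]`. -/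
theorem stmt15 (F : Type*) [Field F] [CharZero F] (N k : ℕ)
    (P : Polynomial (MvPolynomial (Fin N) F)) (hP0 : P ≠ 0)
    (hdeg : P.natDegree ≤ k)
    (f : MvPolynomial (Fin N) F)
    (hroot : P.eval f = 0)
    (hderiv : (Polynomial.map (MvPolynomial.eval (fun _ : Fin N => (0 : F)))
        P.derivative).eval (MvPolynomial.eval (fun _ : Fin N => (0 : F)) f) ≠ 0) :
    ∀ t : ℕ, ∃ R : MvPolynomial (Fin (k + 1)) F, R.totalDegree ≤ t ∧
      homLE t f = homLE t (aeval (fun i : Fin (k + 1) => P.coeff (i : ℕ)) R) :=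
  stmt15_general F N k P hdeg f hroot hderiv
end

section
/- There is an absolute constant C such that for every pair of natural numbers a, b with 2 ≤ b < 2^a, there exist an integer l ≤ C·a²/log₂ b and sets S_1, S_2, …, S_b ⊆ {1, 2, …, l} such that |S_i| = a for every i, and |S_i ∩ S_j| ≤ log₂ b for all i ≠ j. -/
/-!
Codes give designs: if words `w₁, …, w_b : [a] → [q]` pairwise agree in at most
`m = ⌊log₂ b⌋` coordinates, their graphs are `a`-subsets of `[a] × [q]` pairwise meeting in at
most `m` points. At most `C(a, m+1) · q^(a-m-1)` words agree with a given one in `m + 1`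
places, so such words can be chosen greedily as long as `b · C(a, m+1) · q^(a-m-1) < q^a`.
Since `b < 2^(m+1)` and `C(a, k) ≤ (3a/k)^k`, the alphabet size `q = ⌊6a/(m+1)⌋ + 1` suffices,
and the universe then has `aq ≤ 7a²/(m+1) ≤ 7a²/log₂ b` points.
-/

open Finset Fintype

theorem exists_pairwise_not_rel {α : Type*} [Fintype α] [DecidableEq α] (r : α → α → Prop)
    [DecidableRel r] (hr : ∀ x y, r x y → r y x) (D : ℕ) (hD : ∀ x, #{y | r x y} ≤ D) :
    ∀ n, n * D < card α → ∃ f : Fin n → α, Pairwise fun i j ↦ ¬ r (f i) (f j)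
  | 0, _ => ⟨Fin.elim0, fun i ↦ i.elim0⟩
  | n + 1, hn => by
    obtain ⟨f, hf⟩ := exists_pairwise_not_rel r hr D hD n (by nlinarith)
    have hcovered : #(univ.biUnion fun i ↦ ({y | r (f i) y} : Finset α)) < #(univ : Finset α) :=
      calc _ ≤ #(univ : Finset (Fin n)) * D := card_biUnion_le_card_mul _ _ _ fun i _ ↦ hD (f i)
        _ < _ := by simp only [card_univ, Fintype.card_fin]; nlinarith
    obtain ⟨y, -, hy⟩ := exists_mem_notMem_of_card_lt_card hcovered
    simp only [mem_biUnion, mem_univ, mem_filter, true_and, not_exists] at hy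
    refine ⟨Fin.cons y f, ?_⟩
    intro i j hij
    cases i using Fin.cases <;> cases j using Fin.cases
    · exact (hij rfl).elim
    · simpa using fun h ↦ hy _ (hr _ _ h)
    · simpa using hy _
    · simpa using hf (ne_of_apply_ne Fin.succ hij)

theorem card_filter_agree_ge_le {ι β : Type*} [Fintype ι] [DecidableEq ι] [Fintype β]
    [DecidableEq β] (f : ι → β) (k : ℕ) :
    #({g | k ≤ #{i | f i = g i}} : Finset (ι → β)) ≤
      (card ι).choose k * card β ^ (card ι - k) := by
  let agreeOn (T : Finset ι) : Finset (ι → β) :=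
    piFinset fun i ↦ if i ∈ T then {f i} else univ
  have hsub : ({g | k ≤ #{i | f i = g i}} : Finset (ι → β)) ⊆
      (powersetCard k univ).biUnion agreeOn := by
    intro g hg
    obtain ⟨T, hT, hTcard⟩ := exists_subset_card_eq (mem_filter.1 hg).2
    refine mem_biUnion.2 ⟨T, mem_powersetCard.2 ⟨subset_univ T, hTcard⟩, ?_⟩
    simp only [agreeOn, mem_piFinset]
    intro i
    split_ifs with hi
    · exact mem_singleton.2 (mem_filter.1 (hT hi)).2.symm
    · exact mem_univ _
  have hcard : ∀ T ∈ powersetCard k (univ : Finset ι),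
      #(agreeOn T) = card β ^ (card ι - k) := by
    intro T hT
    simp only [agreeOn, card_piFinset, apply_ite card, card_singleton, card_univ]
    rw [prod_ite, prod_const_one, one_mul, prod_const, filter_notMem_eq_sdiff, card_univ_sdiff,
      (mem_powersetCard.1 hT).2]
  calc _ ≤ _ := card_le_card hsub
    _ ≤ #(powersetCard k (univ : Finset ι)) * card β ^ (card ι - k) :=
      card_biUnion_le_card_mul _ _ _ fun T hT ↦ (hcard T hT).le
    _ = _ := by rw [card_powersetCard, card_univ]

theorem exists_pairwise_card_agree_lt {ι β : Type*} [Fintype ι] [DecidableEq ι] [Fintype β]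
    [DecidableEq β] (n k : ℕ)
    (h : n * ((card ι).choose k * card β ^ (card ι - k)) < card β ^ card ι) :
    ∃ w : Fin n → ι → β, Pairwise fun i j ↦ #{x | w i x = w j x} < k := by
  obtain ⟨w, hw⟩ := exists_pairwise_not_rel (fun f g : ι → β ↦ k ≤ #{x | f x = g x})
    (fun f g ↦ by simp only [eq_comm, imp_self]) _ (card_filter_agree_ge_le · k) n
    (by rwa [card_fun])
  exact ⟨w, fun i j hij ↦ not_le.1 (hw hij)⟩

theorem choose_mul_pow_self_le (n k : ℕ) : n.choose k * k ^ k ≤ (3 * n) ^ k := by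
  have hexp : (k : ℝ) ^ k / k.factorial ≤ 3 ^ k :=
    calc (k : ℝ) ^ k / k.factorial ≤ Real.exp k :=
          Real.pow_div_factorial_le_exp _ k.cast_nonneg k
      _ = Real.exp 1 ^ k := by rw [← Real.exp_nat_mul, mul_one]
      _ ≤ 3 ^ k := by
        gcongr
        linarith [Real.exp_one_lt_d9]
  have : (n.choose k : ℝ) * k ^ k ≤ (3 * n) ^ k :=
    calc (n.choose k : ℝ) * k ^ k ≤ n ^ k / k.factorial * k ^ k := by
          gcongr; exact Nat.choose_le_pow_div k n
      _ = n ^ k * (k ^ k / k.factorial) := by ring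
      _ ≤ n ^ k * 3 ^ k := by gcongr
      _ = (3 * n) ^ k := by ring
  exact_mod_cast this

theorem mul_choose_mul_pow_lt_pow {a b k : ℕ} (hk : 0 < k) (hka : k ≤ a) (hb : b < 2 ^ k) :
    b * (a.choose k * (6 * a / k + 1) ^ (a - k)) < (6 * a / k + 1) ^ a := by
  set q := 6 * a / k + 1
  have h6a : 6 * a < q * k := by
    have := Nat.lt_div_mul_add (a := 6 * a) hk
    simpa [q, add_mul] using this
  have hchoose : b * a.choose k < q ^ k := by
    refine lt_of_mul_lt_mul_right ?_ (Nat.zero_le (k ^ k))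
    calc b * a.choose k * k ^ k = b * (a.choose k * k ^ k) := by ring
      _ < 2 ^ k * (3 * a) ^ k := by
        have ha : 0 < a := hk.trans_le hka
        exact Nat.mul_lt_mul_of_lt_of_le hb (choose_mul_pow_self_le a k) (by positivity)
      _ = (6 * a) ^ k := by rw [← mul_pow]; ring
      _ < (q * k) ^ k := Nat.pow_lt_pow_left h6a hk.ne'
      _ = q ^ k * k ^ k := mul_pow _ _ _
  calc b * (a.choose k * q ^ (a - k)) = b * a.choose k * q ^ (a - k) := by ring
    _ < q ^ k * q ^ (a - k) := Nat.mul_lt_mul_of_pos_right hchoose (by positivity)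
    _ = q ^ a := by rw [← pow_add, Nat.add_sub_cancel' hka]

theorem mul_mul_div_add_one_le (a c k : ℕ) (hka : k ≤ a) :
    k * (a * (c * a / k + 1)) ≤ (c + 1) * a ^ 2 := by
  have := Nat.mul_div_le (c * a) k
  calc k * (a * (c * a / k + 1)) = a * (k * (c * a / k)) + k * a := by ring
    _ ≤ a * (c * a) + a * a := by gcongr
    _ = (c + 1) * a ^ 2 := by ring

section Graph

variable {ι β : Type*} [Fintype ι]

def graphFinset (f : ι → β) : Finset (ι × β) :=
  univ.map ⟨fun i ↦ (i, f i), fun _ _ h ↦ congrArg Prod.fst h⟩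

theorem mem_graphFinset {f : ι → β} {p : ι × β} :
    p ∈ graphFinset f ↔ f p.1 = p.2 := by
  simp only [graphFinset, mem_map, mem_univ, true_and]
  constructor
  · rintro ⟨i, rfl⟩
    rfl
  · intro h
    exact ⟨p.1, Prod.ext rfl h⟩

theorem card_graphFinset (f : ι → β) :
    #(graphFinset f) = card ι := by
  simp [graphFinset]

theorem card_graphFinset_inter [DecidableEq ι] [DecidableEq β] (f g : ι → β) :
    #(graphFinset f ∩ graphFinset g) = #{i | f i = g i} := by
  have : graphFinset f ∩ graphFinset g = (graphFinset f).filter fun p ↦ p.2 = g p.1 := by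
    ext ⟨i, y⟩
    simp only [mem_inter, mem_filter, mem_graphFinset]
    grind
  rw [this, graphFinset, filter_map, card_map]
  rfl

end Graph

theorem Real.logb_lt_natLog_add_one (b n : ℕ) : Real.logb b n < Nat.log b n + 1 := by
  rw [← Real.natFloor_logb_natCast]
  exact Nat.lt_floor_add_one _

/-- Nisan–Wigderson designs. There is an absolute constant `C` such
that for all naturals `a, b` with `2 ≤ b < 2^a` there exist `l ≤ C·a²/log₂ b` and sets
`S_1, …, S_b ⊆ {1,…,l}` with `|S_i| = a` for every `i` and `|S_i ∩ S_j| ≤ log₂ b` for all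
`i ≠ j`. -/
theorem stmt16 :
    ∃ C : ℝ, ∀ a b : ℕ, 2 ≤ b → b < 2 ^ a →
      ∃ l : ℕ, (l : ℝ) ≤ C * (a : ℝ) ^ 2 / Real.logb 2 b ∧
      ∃ S : Fin b → Finset (Fin l),
        (∀ i, (S i).card = a) ∧
        ∀ i j, i ≠ j → (((S i ∩ S j).card : ℝ)) ≤ Real.logb 2 b := by
  refine ⟨7, fun a b hb hba ↦ ?_⟩
  set m := Nat.log 2 b
  have hbm : b < 2 ^ (m + 1) := Nat.lt_pow_succ_log_self one_lt_two b
  have hma : m + 1 ≤ a := Nat.log_lt_of_lt_pow (by omega) hba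
  have hm_le : (m : ℝ) ≤ Real.logb 2 b := by exact_mod_cast Real.natLog_le_logb b 2
  have hlt_m : Real.logb 2 b < m + 1 := by exact_mod_cast Real.logb_lt_natLog_add_one 2 b
  have hlog_pos : 0 < Real.logb 2 b := Real.logb_pos one_lt_two (by exact_mod_cast hb)
  set q := 6 * a / (m + 1) + 1
  obtain ⟨w, hw⟩ := exists_pairwise_card_agree_lt (ι := Fin a) (β := Fin q) b (m + 1)
    (by simpa using mul_choose_mul_pow_lt_pow m.succ_pos hma hbm)
  refine ⟨a * q, ?_, fun i ↦ (graphFinset (w i)).map finProdFinEquiv.toEmbedding,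
    fun i ↦ by simp [card_graphFinset], fun i j hij ↦ ?_⟩
  · have hl : ((m + 1 : ℕ) : ℝ) * (a * q : ℕ) ≤ 7 * a ^ 2 := by
      exact_mod_cast mul_mul_div_add_one_le a 6 (m + 1) hma
    push_cast at hl
    calc ((a * q : ℕ) : ℝ) ≤ 7 * a ^ 2 / (m + 1) := by
          rw [le_div_iff₀ (by positivity)]; push_cast; linarith
      _ ≤ 7 * a ^ 2 / Real.logb 2 b := by gcongr
  · have hagree : #{x | w i x = w j x} ≤ m := Nat.lt_succ_iff.1 (hw hij)
    rw [← map_inter, card_map, card_graphFinset_inter]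
    exact le_trans (by exact_mod_cast hagree) hm_le
end
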